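/- (Theorem 3.2, order-reversed Serre–Lusztig relations for i ≠ τi.) Assume in addition the BKL relation: ∑_{n=0}^{1−c} (−1)^{n+c} B_i^{(n)} B_{τi} B_i^{(1−c−n)} = (q_i − q_i^{-1})^{-1} ( q_i^{c} (q_i^{-2}; q_i^{-2})_{−c} B_i^{(−c)} k̃_i − (q_i^{2}; q_i^{2})_{−c} B_i^{(−c)} k̃_{τi} ), where (a; x)_n = ∏_{k=0}^{n−1} (1 − a x^k). Then ỹ'_{m,e} = 0 for every integer m ≥ 1−c and every e ∈ {1, −1}. -/

import Mathlib

noncomputable section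

/-- The quantum integer `[n]_v = (v^n - v^{-n})/(v - v^{-1})`. -/
def qint {K : Type*} [Field K] (v : RatFunc K) (n : ℤ) : RatFunc K :=
  (v ^ n - v ^ (-n)) / (v - v⁻¹)

/-- The quantum factorial `[m]_v! = [1]_v [2]_v ⋯ [m]_v`. -/
def qfact {K : Type*} [Field K] (v : RatFunc K) (m : ℕ) : RatFunc K :=
  ∏ k ∈ Finset.range m, qint v ((k : ℤ) + 1)

/-- The q-Pochhammer symbol `(a; x)_n = ∏_{k=0}^{n-1} (1 - a x^k)`. -/
def qpoch {K : Type*} [Field K] (a x : RatFunc K) (n : ℕ) : RatFunc K :=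
  ∏ k ∈ Finset.range n, (1 - a * x ^ k)

/-- The divided power `x^{(m)} = x^m/[m]_v!` for `m ≥ 0`, and `0` for `m < 0`. -/
def dp {K : Type*} [Field K] {A : Type*} [Ring A] [Algebra (RatFunc K) A]
    (v : RatFunc K) (x : A) (m : ℤ) : A :=
  if m < 0 then 0 else (qfact v m.toNat)⁻¹ • x ^ m.toNat

/-- `P_{m,e} = ∏_{j=0}^{c+m−2} (−q_i^{e(2j−c−2m+2)} + q_i^{c−2})`,
an empty product (occurring when `c+m−2 < 0`) being `1`. -/
def Pprod {K : Type*} [Field K] (v : RatFunc K) (c : ℤ) (m : ℕ) (e : ℤ) : RatFunc K :=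
  ∏ j ∈ Finset.range (c + (m : ℤ) - 1).toNat,
    (-(v ^ (e * (2 * (j : ℤ) - c - 2 * (m : ℤ) + 2))) + v ^ (c - 2))

/-- `Q_{m,e} = ∏_{j=0}^{c+m−2} (−q_i^{e(2j−c−2m+2)} + q_i^{2−c})`. -/
def Qprod {K : Type*} [Field K] (v : RatFunc K) (c : ℤ) (m : ℕ) (e : ℤ) : RatFunc K :=
  ∏ j ∈ Finset.range (c + (m : ℤ) - 1).toNat,
    (-(v ^ (e * (2 * (j : ℤ) - c - 2 * (m : ℤ) + 2))) + v ^ (2 - c))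

/-- The element `ỹ_{m,e} = ∑_{r+s=m} (−1)^{r+c} q_i^{er(1−c−m)} B_i^{(r)} B_{τi} B_i^{(s)}
− ([1−c]!/[m]) (q_i−q_i^{-1})^{−c−1} ( P_{m,e} q_i^{(−c²+3c)/2} B_i^{(m−1)} k̃_i
  − (−1)^c Q_{m,e} q_i^{(c²−c)/2} B_i^{(m−1)} k̃_{τi} )`. -/
def ytil {K : Type*} [Field K] {A : Type*} [Ring A] [Algebra (RatFunc K) A]
    (v : RatFunc K) (Bi Bt ki kt : A) (c : ℤ) (m : ℕ) (e : ℤ) : A :=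
  (∑ r ∈ Finset.range (m + 1),
      ((-1 : RatFunc K) ^ ((r : ℤ) + c) * v ^ (e * (r : ℤ) * (1 - c - (m : ℤ)))) •
        (dp v Bi (r : ℤ) * Bt * dp v Bi ((m : ℤ) - (r : ℤ))))
    - (qfact v (1 - c).toNat / qint v (m : ℤ) * (v - v⁻¹) ^ (-c - 1)) •
      ((Pprod v c m e * v ^ ((-c ^ 2 + 3 * c) / 2)) • (dp v Bi ((m : ℤ) - 1) * ki)
        - ((-1 : RatFunc K) ^ c * Qprod v c m e * v ^ ((c ^ 2 - c) / 2)) •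
            (dp v Bi ((m : ℤ) - 1) * kt))

/-- The order-reversed element `ỹ'_{m,e}`. -/
def ytil' {K : Type*} [Field K] {A : Type*} [Ring A] [Algebra (RatFunc K) A]
    (v : RatFunc K) (Bi Bt ki kt : A) (c : ℤ) (m : ℕ) (e : ℤ) : A :=
  (∑ r ∈ Finset.range (m + 1),
      ((-1 : RatFunc K) ^ ((r : ℤ) + c) * v ^ (e * (r : ℤ) * (1 - c - (m : ℤ)))) •
        (dp v Bi ((m : ℤ) - (r : ℤ)) * Bt * dp v Bi (r : ℤ)))
    - (qfact v (1 - c).toNat / qint v (m : ℤ) * (v - v⁻¹) ^ (-c - 1)) •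
      ((Pprod v c m e * v ^ ((-c ^ 2 + 3 * c) / 2)) • (kt * dp v Bi ((m : ℤ) - 1))
        - ((-1 : RatFunc K) ^ c * Qprod v c m e * v ^ ((c ^ 2 - c) / 2)) •
            (ki * dp v Bi ((m : ℤ) - 1)))

/-- The BKL relation
`∑_{n=0}^{1−c} (−1)^{n+c} B_i^{(n)} B_{τi} B_i^{(1−c−n)}
 = (q_i−q_i^{-1})^{-1} ( q_i^c (q_i^{-2};q_i^{-2})_{−c} B_i^{(−c)} k̃_i
   − (q_i^2;q_i^2)_{−c} B_i^{(−c)} k̃_{τi} )`. -/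
def BKL {K : Type*} [Field K] {A : Type*} [Ring A] [Algebra (RatFunc K) A]
    (v : RatFunc K) (Bi Bt ki kt : A) (c : ℤ) : Prop :=
  ∑ n ∈ Finset.range ((1 - c).toNat + 1),
      ((-1 : RatFunc K) ^ ((n : ℤ) + c)) • (dp v Bi (n : ℤ) * Bt * dp v Bi (1 - c - (n : ℤ)))
    = (v - v⁻¹)⁻¹ •
        ((v ^ c * qpoch (v ^ (-2 : ℤ)) (v ^ (-2 : ℤ)) (-c).toNat) • (dp v Bi (-c) * ki)
          - qpoch (v ^ (2 : ℤ)) (v ^ (2 : ℤ)) (-c).toNat • (dp v Bi (-c) * kt))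

/-!
The `q_i^{-e(c+2m)}`-commutator `y ↦ B_i y - q_i^{-e(c+2m)} y B_i` sends `ỹ'_{m,e}` to
`[m+1] ỹ'_{m+1,e}` once `m ≥ 1 - c`: on divided powers `B_i B_i^{(k)} = [k+1] B_i^{(k+1)}`, so on
the sum this is the q-Pascal identity `[s] = q_i^{er}[s-r] + q_i^{e(r-s)}[r]`, while `k̃_i` and
`k̃_{τi}` move past `B_i` at the cost of a scalar, which is exactly the new factor of `P_{m+1,e}`
and `Q_{m+1,e}`.
As `q_i = q^ε` is not a root of unity, `[m+1] ≠ 0`, and it remains to show `ỹ'_{1-c,e} = 0`.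
Reversing the order of summation turns this into the BKL relation, once the q-Pochhammer symbols are
rewritten as `[n]! (q_i - q_i⁻¹)^n = q_i^{n(n+1)/2} (q_i^{-2}; q_i^{-2})_n
= (-1)^n q_i^{-n(n+1)/2} (q_i^2; q_i^2)_n`.
-/

open Finset

lemma neg_one_zpow_eq_of_even_sub {F : Type*} [DivisionRing F] {a b : ℤ} (h : Even (a - b)) :
    (-1 : F) ^ a = (-1) ^ b := by
  rw [← Int.cast_negOnePow, ← Int.cast_negOnePow, (Int.negOnePow_eq_iff _ _).2 h]

lemma RatFunc.intDegree_X_zpow {K : Type*} [Field K] (n : ℤ) :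
    (RatFunc.X ^ n : RatFunc K).intDegree = n := by
  induction n using Int.induction_on with
  | zero => simp
  | succ n ih =>
    rw [zpow_add_one₀ RatFunc.X_ne_zero, RatFunc.intDegree_mul (zpow_ne_zero _ RatFunc.X_ne_zero)
      RatFunc.X_ne_zero, ih, RatFunc.intDegree_X]
  | pred n ih =>
    rw [zpow_sub_one₀ RatFunc.X_ne_zero, RatFunc.intDegree_mul (zpow_ne_zero _ RatFunc.X_ne_zero)
      (inv_ne_zero RatFunc.X_ne_zero), ih, RatFunc.intDegree_inv, RatFunc.intDegree_X]
    ring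

lemma qint_X_pow_ne_zero {K : Type*} [Field K] {ε : ℕ} (hε : 0 < ε) {n : ℤ} (hn : n ≠ 0) :
    qint (RatFunc.X ^ ε : RatFunc K) n ≠ 0 := by
  have hdeg (k : ℤ) : ((RatFunc.X ^ ε : RatFunc K) ^ k).intDegree = ε * k := by
    rw [← zpow_natCast, ← zpow_mul, RatFunc.intDegree_X_zpow]
  have hne {a b : ℤ} (hab : a ≠ b) : (RatFunc.X ^ ε : RatFunc K) ^ a ≠ (RatFunc.X ^ ε) ^ b :=
    fun h => hab <| by
      have := congrArg RatFunc.intDegree h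
      rw [hdeg, hdeg] at this
      exact mul_left_cancel₀ (by positivity) this
  refine div_ne_zero (sub_ne_zero.2 (hne (by omega))) (sub_ne_zero.2 ?_)
  simpa using hne (a := 1) (b := -1) (by omega)

section QInt

variable {K : Type*} [Field K] (v : RatFunc K)

@[simp]
lemma qint_zero : qint v 0 = 0 := by simp [qint]

lemma ne_zero_of_qint_one_ne_zero (h : qint v 1 ≠ 0) : v ≠ 0 := by
  rintro rfl
  simp [qint] at h

lemma sub_inv_ne_zero_of_qint_one_ne_zero (h : qint v 1 ≠ 0) : v - v⁻¹ ≠ 0 := by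
  intro hw
  simp [qint, hw] at h

lemma qint_mul_sub_inv (hw : v - v⁻¹ ≠ 0) (n : ℤ) : qint v n * (v - v⁻¹) = v ^ n - v ^ (-n) :=
  div_mul_cancel₀ _ hw

lemma qint_eq_add {e : ℤ} (he : e = 1 ∨ e = -1) (hv : v ≠ 0) (r s : ℤ) :
    qint v s = v ^ (e * r) * qint v (s - r) + v ^ (e * r - e * s) * qint v r := by
  simp only [qint, mul_div_assoc', ← add_div]
  congr 1
  rcases he with rfl | rfl <;>
  · simp only [one_mul, neg_mul, mul_sub, zpow_sub₀ hv, zpow_neg]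
    field_simp
    ring

lemma qfact_succ (n : ℕ) : qfact v (n + 1) = qfact v n * qint v (n + 1) := by
  simp [qfact, prod_range_succ]

end QInt

lemma sq_add_self_ediv_two_succ (n : ℕ) :
    (((n + 1 : ℕ) : ℤ) ^ 2 + (n + 1 : ℕ)) / 2 = ((n : ℤ) ^ 2 + n) / 2 + (n + 1) := by
  rw [← Int.add_mul_ediv_right _ _ two_ne_zero]; push_cast; ring_nf

section Pochhammer

variable {K : Type*} [Field K] {v : RatFunc K} (hv : v ≠ 0) (hw : v - v⁻¹ ≠ 0)
include hv hw

lemma qfact_mul_pow_eq_zpow_mul_qpoch (n : ℕ) :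
    qfact v n * (v - v⁻¹) ^ n
      = v ^ (((n : ℤ) ^ 2 + n) / 2) * qpoch (v ^ (-2 : ℤ)) (v ^ (-2 : ℤ)) n := by
  induction n with
  | zero => simp [qfact, qpoch]
  | succ n ih =>
    have hfac : v ^ ((n : ℤ) + 1) * (1 - v ^ (-2 : ℤ) * (v ^ (-2 : ℤ)) ^ n)
        = v ^ ((n : ℤ) + 1) - v ^ (-((n : ℤ) + 1)) := by
      rw [mul_sub, mul_one, ← zpow_natCast, ← zpow_mul, ← zpow_add₀ hv, ← zpow_add₀ hv]
      ring_nf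
    rw [qfact_succ, pow_succ, mul_mul_mul_comm, ih, qint_mul_sub_inv v hw, ← hfac,
      sq_add_self_ediv_two_succ, zpow_add₀ hv (((n : ℤ) ^ 2 + n) / 2)]
    simp only [qpoch, prod_range_succ]
    ring

lemma qfact_mul_pow_eq_neg_one_pow_mul_qpoch (n : ℕ) :
    qfact v n * (v - v⁻¹) ^ n
      = (-1) ^ n * v ^ (-(((n : ℤ) ^ 2 + n) / 2)) * qpoch (v ^ (2 : ℤ)) (v ^ (2 : ℤ)) n := by
  induction n with
  | zero => simp [qfact, qpoch]
  | succ n ih =>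
    have hfac : -v ^ (-((n : ℤ) + 1)) * (1 - v ^ (2 : ℤ) * (v ^ (2 : ℤ)) ^ n)
        = v ^ ((n : ℤ) + 1) - v ^ (-((n : ℤ) + 1)) := by
      rw [mul_sub, mul_one, ← zpow_natCast, ← zpow_mul, neg_mul, ← zpow_add₀ hv,
        ← zpow_add₀ hv]
      ring_nf
    rw [qfact_succ, pow_succ, mul_mul_mul_comm, ih, qint_mul_sub_inv v hw, ← hfac,
      sq_add_self_ediv_two_succ, neg_add (((n : ℤ) ^ 2 + n) / 2),
      zpow_add₀ hv (-(((n : ℤ) ^ 2 + n) / 2))]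
    simp only [qpoch, prod_range_succ]
    ring

end Pochhammer

section DividedPowers

variable {K : Type*} [Field K] {A : Type*} [Ring A] [Algebra (RatFunc K) A] {v : RatFunc K}

lemma dp_natCast (x : A) (n : ℕ) : dp v x n = (qfact v n)⁻¹ • x ^ n := by
  simp [dp]

lemma dp_of_neg (x : A) {n : ℤ} (hn : n < 0) : dp v x n = 0 := if_pos hn

lemma mul_dp (x : A) {n : ℤ} (hn : qint v (n + 1) ≠ 0) :
    x * dp v x n = qint v (n + 1) • dp v x (n + 1) := by
  rcases lt_or_ge n 0 with hn0 | hn0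
  · have hn1 : n + 1 ≠ 0 := by intro h; simp [h] at hn
    rw [dp_of_neg x hn0, dp_of_neg x (by omega), mul_zero, smul_zero]
  · lift n to ℕ using hn0
    have hd : dp v x ((n : ℤ) + 1) = (qfact v (n + 1))⁻¹ • x ^ (n + 1) := by
      exact_mod_cast dp_natCast x (n + 1)
    rw [dp_natCast, hd, qfact_succ, mul_smul_comm, smul_smul, ← pow_succ', mul_inv,
      mul_left_comm, mul_inv_cancel₀ hn, mul_one]

lemma dp_mul (x : A) {n : ℤ} (hn : qint v (n + 1) ≠ 0) :
    dp v x n * x = qint v (n + 1) • dp v x (n + 1) := by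
  rw [← mul_dp x hn]
  rcases lt_or_ge n 0 with hn0 | hn0
  · simp [dp_of_neg x hn0]
  · lift n to ℕ using hn0
    rw [dp_natCast, smul_mul_assoc, mul_smul_comm, pow_mul_comm']

lemma mul_dp_of_mul_eq_smul {k x : A} {u : RatFunc K} (h : k * x = u • (x * k)) (n : ℕ) :
    k * dp v x n = u ^ n • (dp v x n * k) := by
  have hpow : k * x ^ n = u ^ n • (x ^ n * k) := by
    induction n with
    | zero => simp
    | succ n ih =>
      rw [pow_succ, ← mul_assoc, ih, smul_mul_assoc, mul_assoc, h, mul_smul_comm, smul_smul,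
        ← mul_assoc, pow_succ]
  rw [dp_natCast, mul_smul_comm, hpow, smul_mul_assoc, smul_comm]

end DividedPowers

section QCommutator

variable {K : Type*} [Field K] {A : Type*} [Ring A] [Algebra (RatFunc K) A] {v : RatFunc K}

def qComm (b : A) (t : RatFunc K) : A →ₗ[RatFunc K] A :=
  LinearMap.mulLeft (RatFunc K) b - t • LinearMap.mulRight (RatFunc K) b

lemma qComm_apply (b : A) (t : RatFunc K) (y : A) : qComm b t y = b * y - t • (y * b) := rfl

lemma qComm_mul_dp {k x : A} {u : RatFunc K} (h : k * x = u • (x * k)) (hu : u ≠ 0) {n : ℤ}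
    (hn : qint v (n + 1) ≠ 0) (t : RatFunc K) :
    qComm x t (k * dp v x n) = ((u⁻¹ - t) * qint v (n + 1)) • (k * dp v x (n + 1)) := by
  have hxk : x * k = u⁻¹ • (k * x) := by rw [h, smul_smul, inv_mul_cancel₀ hu, one_smul]
  rw [qComm_apply, ← mul_assoc, hxk, smul_mul_assoc, mul_assoc, mul_dp x hn, mul_assoc,
    dp_mul x hn, mul_smul_comm, smul_smul, smul_smul, ← sub_smul, sub_mul]

end QCommutator

section SerreLusztig

variable {K : Type*} [Field K] {A : Type*} [Ring A] [Algebra (RatFunc K) A] {v : RatFunc K}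

def ytilRevSum (v : RatFunc K) (Bi Bt : A) (c : ℤ) (m : ℕ) (e : ℤ) : A :=
  ∑ r ∈ range (m + 1),
    ((-1 : RatFunc K) ^ ((r : ℤ) + c) * v ^ (e * (r : ℤ) * (1 - c - (m : ℤ)))) •
      (dp v Bi ((m : ℤ) - (r : ℤ)) * Bt * dp v Bi (r : ℤ))

def ytilRevCorrection (v : RatFunc K) (Bi ki kt : A) (c : ℤ) (m : ℕ) (e : ℤ) : A :=
  (qfact v (1 - c).toNat / qint v (m : ℤ) * (v - v⁻¹) ^ (-c - 1)) •
    ((Pprod v c m e * v ^ ((-c ^ 2 + 3 * c) / 2)) • (kt * dp v Bi ((m : ℤ) - 1))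
      - ((-1 : RatFunc K) ^ c * Qprod v c m e * v ^ ((c ^ 2 - c) / 2)) •
          (ki * dp v Bi ((m : ℤ) - 1)))

lemma ytil'_eq_sub (Bi Bt ki kt : A) (c : ℤ) (m : ℕ) (e : ℤ) :
    ytil' v Bi Bt ki kt c m e = ytilRevSum v Bi Bt c m e - ytilRevCorrection v Bi ki kt c m e :=
  rfl

lemma ytilRevSum_coeff_succ {e : ℤ} (he : e = 1 ∨ e = -1) (hv : v ≠ 0) (r m c : ℤ) :
    (-1) ^ (r + c) * v ^ (e * r * (1 - c - m)) * qint v (m + 1 - r)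
      - v ^ (-(e * (c + 2 * m))) * ((-1) ^ (r - 1 + c) * v ^ (e * (r - 1) * (1 - c - m)) * qint v r)
      = qint v (m + 1) * ((-1) ^ (r + c) * v ^ (e * r * (1 - c - (m + 1)))) := by
  have hsign : (-1 : RatFunc K) ^ (r - 1 + c) = -(-1) ^ (r + c) := by
    rw [show r - 1 + c = r + c - 1 by ring, zpow_sub_one₀ (neg_ne_zero.2 one_ne_zero), inv_neg,
      inv_one, mul_neg_one]
  have hA : v ^ (e * r * (1 - c - m)) = v ^ (e * r * (1 - c - (m + 1))) * v ^ (e * r) := by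
    rw [← zpow_add₀ hv]; ring_nf
  have hB : v ^ (-(e * (c + 2 * m))) * v ^ (e * (r - 1) * (1 - c - m))
      = v ^ (e * r * (1 - c - (m + 1))) * v ^ (e * r - e * (m + 1)) := by
    rw [← zpow_add₀ hv, ← zpow_add₀ hv]; ring_nf
  rw [qint_eq_add v he hv r (m + 1), hsign, hA]
  linear_combination (-1 : RatFunc K) ^ (r + c) * qint v r * hB

lemma qComm_ytilRevSum (hq : ∀ n : ℤ, n ≠ 0 → qint v n ≠ 0) {e : ℤ} (he : e = 1 ∨ e = -1)
    (Bi Bt : A) (c : ℤ) (m : ℕ) :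
    qComm Bi (v ^ (-(e * (c + 2 * m)))) (ytilRevSum v Bi Bt c m e)
      = qint v (m + 1) • ytilRevSum v Bi Bt c (m + 1) e := by
  have hv := ne_zero_of_qint_one_ne_zero v (hq 1 one_ne_zero)
  -- Both products are spread over the index range of `ytilRevSum v Bi Bt c (m + 1) e`;
  -- the boundary terms this adds carry the factor `[0] = 0`.
  have hleft : Bi * ytilRevSum v Bi Bt c m e
      = ∑ r ∈ range (m + 2), ((-1) ^ ((r : ℤ) + c) * v ^ (e * r * (1 - c - m))
          * qint v (m + 1 - r)) • (dp v Bi (m + 1 - r) * Bt * dp v Bi r) := by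
    rw [ytilRevSum, mul_sum, sum_range_succ _ (m + 1)]
    rw [show (m : ℤ) + 1 - ((m + 1 : ℕ) : ℤ) = 0 by push_cast; ring, qint_zero, mul_zero,
      zero_smul, add_zero]
    refine sum_congr rfl fun r hr => ?_
    have hr : r ≤ m := Nat.lt_succ_iff.1 (mem_range.1 hr)
    rw [mul_smul_comm, ← mul_assoc, ← mul_assoc, mul_dp Bi (hq _ (by omega)), smul_mul_assoc,
      smul_mul_assoc, smul_smul, sub_add_eq_add_sub]
  have hright : ytilRevSum v Bi Bt c m e * Bi
      = ∑ r ∈ range (m + 2), ((-1) ^ ((r : ℤ) - 1 + c) * v ^ (e * (r - 1) * (1 - c - m))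
          * qint v r) • (dp v Bi (m + 1 - r) * Bt * dp v Bi r) := by
    rw [ytilRevSum, sum_mul, sum_range_succ' _ (m + 1)]
    rw [Nat.cast_zero, qint_zero, mul_zero, zero_smul, add_zero]
    refine sum_congr rfl fun r _ => ?_
    rw [smul_mul_assoc, mul_assoc _ (dp v Bi r), dp_mul Bi (hq _ (by omega)), mul_smul_comm,
      smul_smul]
    push_cast
    ring_nf
  rw [qComm_apply, hleft, hright, smul_sum, ← sum_sub_distrib, ytilRevSum, smul_sum]
  refine sum_congr rfl fun r _ => ?_
  rw [smul_smul, smul_smul, ← sub_smul, ytilRevSum_coeff_succ he hv]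
  push_cast
  ring_nf

lemma prod_neg_zpow_add_succ (c e : ℤ) (m : ℕ) (hm : 1 - c ≤ m) (a : RatFunc K) :
    ∏ j ∈ range (c + ((m + 1 : ℕ) : ℤ) - 1).toNat,
        (-(v ^ (e * (2 * (j : ℤ) - c - 2 * ((m + 1 : ℕ) : ℤ) + 2))) + a)
      = (∏ j ∈ range (c + (m : ℤ) - 1).toNat,
          (-(v ^ (e * (2 * (j : ℤ) - c - 2 * (m : ℤ) + 2))) + a))
        * (a - v ^ (-(e * (c + 2 * m)))) := by
  rw [show (c + ((m + 1 : ℕ) : ℤ) - 1).toNat = (c + (m : ℤ) - 1).toNat + 1 by omega,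
    prod_range_succ']
  congr 1
  · refine prod_congr rfl fun j _ => ?_
    push_cast
    ring_nf
  · push_cast
    ring_nf

lemma Pprod_succ (c e : ℤ) (m : ℕ) (hm : 1 - c ≤ m) :
    Pprod v c (m + 1) e = Pprod v c m e * (v ^ (c - 2) - v ^ (-(e * (c + 2 * m)))) :=
  prod_neg_zpow_add_succ c e m hm _

lemma Qprod_succ (c e : ℤ) (m : ℕ) (hm : 1 - c ≤ m) :
    Qprod v c (m + 1) e = Qprod v c m e * (v ^ (2 - c) - v ^ (-(e * (c + 2 * m)))) :=
  prod_neg_zpow_add_succ c e m hm _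

lemma qComm_ytilRevCorrection (hq : ∀ n : ℤ, n ≠ 0 → qint v n ≠ 0) (Bi ki kt : A) (c e : ℤ)
    (hki : ki * Bi = v ^ (c - 2) • (Bi * ki)) (hkt : kt * Bi = v ^ (2 - c) • (Bi * kt))
    (m : ℕ) (hm : 1 - c ≤ m) (hm0 : 0 < m) :
    qComm Bi (v ^ (-(e * (c + 2 * m)))) (ytilRevCorrection v Bi ki kt c m e)
      = qint v (m + 1) • ytilRevCorrection v Bi ki kt c (m + 1) e := by
  have hv := ne_zero_of_qint_one_ne_zero v (hq 1 one_ne_zero)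
  have hqm : qint v (m : ℤ) ≠ 0 := hq _ (by omega)
  have hqm1 : qint v ((m : ℤ) + 1) ≠ 0 := hq _ (by omega)
  have hqm' : qint v ((m : ℤ) - 1 + 1) ≠ 0 := by rwa [sub_add_cancel]
  have hkt' := qComm_mul_dp hkt (zpow_ne_zero _ hv) hqm' (v ^ (-(e * (c + 2 * m))))
  have hki' := qComm_mul_dp hki (zpow_ne_zero _ hv) hqm' (v ^ (-(e * (c + 2 * m))))
  rw [sub_add_cancel, ← zpow_neg, neg_sub] at hkt' hki'
  rw [ytilRevCorrection, ytilRevCorrection, map_smul, map_sub, map_smul, map_smul, hkt', hki',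
    Pprod_succ c e m hm, Qprod_succ c e m hm, show ((m + 1 : ℕ) : ℤ) - 1 = m by push_cast; ring]
  simp only [smul_sub, smul_smul]
  push_cast
  congr 2 <;> field_simp

lemma qComm_ytil' (hq : ∀ n : ℤ, n ≠ 0 → qint v n ≠ 0) {e : ℤ} (he : e = 1 ∨ e = -1)
    (Bi Bt ki kt : A) (c : ℤ) (hki : ki * Bi = v ^ (c - 2) • (Bi * ki))
    (hkt : kt * Bi = v ^ (2 - c) • (Bi * kt)) (m : ℕ) (hm : 1 - c ≤ m) (hm0 : 0 < m) :
    qComm Bi (v ^ (-(e * (c + 2 * m)))) (ytil' v Bi Bt ki kt c m e)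
      = qint v (m + 1) • ytil' v Bi Bt ki kt c (m + 1) e := by
  rw [ytil'_eq_sub, ytil'_eq_sub, map_sub, qComm_ytilRevSum hq he,
    qComm_ytilRevCorrection hq Bi ki kt c e hki hkt m hm hm0, smul_sub]

lemma ytilRevSum_base (Bi Bt : A) (n : ℕ) (e : ℤ) :
    ytilRevSum v Bi Bt (-n) (n + 1) e
      = (-(-1) ^ n : RatFunc K) • ∑ k ∈ range (n + 2),
          (-1 : RatFunc K) ^ ((k : ℤ) + -n) • (dp v Bi k * Bt * dp v Bi (1 - -n - k)) := by
  rw [ytilRevSum, ← sum_range_reflect, smul_sum]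
  refine sum_congr rfl fun k hk => ?_
  have hk : k ≤ n + 1 := Nat.lt_succ_iff.1 (mem_range.1 hk)
  have hsign : (-1 : RatFunc K) ^ ((n + 1 - k : ℕ) + -(n : ℤ))
      = -(-1) ^ n * (-1) ^ ((k : ℤ) + -n) := by
    have h1 : (-1 : RatFunc K) ≠ 0 := by norm_num
    rw [show -(-1 : RatFunc K) ^ n * (-1) ^ ((k : ℤ) + -n)
        = (-1) ^ ((1 + n : ℤ) + ((k : ℤ) + -n)) by
      rw [zpow_add₀ h1 (1 + n : ℤ), zpow_add₀ h1 1, zpow_one, zpow_natCast]; ring]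
    exact neg_one_zpow_eq_of_even_sub ⟨-k, by push_cast [hk]; ring⟩
  rw [smul_smul, show n + 1 + 1 - 1 - k = n + 1 - k by omega, hsign,
    show (1 - -(n : ℤ) - ((n + 1 : ℕ) : ℤ)) = 0 by push_cast; ring, mul_zero, zpow_zero, mul_one]
  push_cast [hk]
  ring_nf

lemma ytilRevCorrection_base (hq : ∀ n : ℤ, n ≠ 0 → qint v n ≠ 0) (Bi ki kt : A) (n : ℕ)
    (hki : ki * Bi = v ^ (-n - 2 : ℤ) • (Bi * ki)) (hkt : kt * Bi = v ^ (2 - -n : ℤ) • (Bi * kt))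
    (e : ℤ) :
    ytilRevCorrection v Bi ki kt (-n) (n + 1) e
      = (-(-1) ^ n : RatFunc K) • (v - v⁻¹)⁻¹ •
          ((v ^ (-(n : ℤ)) * qpoch (v ^ (-2 : ℤ)) (v ^ (-2 : ℤ)) n) • (dp v Bi n * ki)
            - qpoch (v ^ (2 : ℤ)) (v ^ (2 : ℤ)) n • (dp v Bi n * kt)) := by
  have hv := ne_zero_of_qint_one_ne_zero v (hq 1 one_ne_zero)
  have hw := sub_inv_ne_zero_of_qint_one_ne_zero v (hq 1 one_ne_zero)
  have hP : Pprod v (-n) (n + 1) e = 1 := by simp [Pprod]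
  have hQ : Qprod v (-n) (n + 1) e = 1 := by simp [Qprod]
  set T : ℤ := ((n : ℤ) ^ 2 + n) / 2 with hTdef
  have hT : (n : ℤ) ^ 2 + n = 2 * T := (Int.mul_ediv_cancel'
    (by simpa [sq, mul_add_one] using (Int.even_mul_succ_self n).two_dvd)).symm
  have hα : (-(-(n : ℤ)) ^ 2 + 3 * -n) / 2 = -T - n := by
    rw [show -(-(n : ℤ)) ^ 2 + 3 * -n = 2 * (-T - n) by linear_combination -hT,
      Int.mul_ediv_cancel_left _ two_ne_zero]
  have hβ : ((-(n : ℤ)) ^ 2 - -n) / 2 = T := by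
    rw [show (-(n : ℤ)) ^ 2 - -n = 2 * T by linear_combination hT,
      Int.mul_ediv_cancel_left _ two_ne_zero]
  have hκ : qfact v (n + 1) / qint v ((n + 1 : ℕ) : ℤ) * (v - v⁻¹) ^ (- -(n : ℤ) - 1)
      = qfact v n * (v - v⁻¹) ^ n * (v - v⁻¹)⁻¹ := by
    rw [qfact_succ, neg_neg, zpow_sub_one₀ hw, zpow_natCast, Nat.cast_succ,
      mul_div_cancel_right₀ _ (hq _ (by omega)), mul_assoc]
  rw [ytilRevCorrection, hP, hQ, show (1 - -(n : ℤ)).toNat = n + 1 by omega, hκ, hα, hβ,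
    show ((n + 1 : ℕ) : ℤ) - 1 = n by push_cast; ring, mul_dp_of_mul_eq_smul hkt,
    mul_dp_of_mul_eq_smul hki, ← zpow_natCast (v ^ (2 - -(n : ℤ))),
    ← zpow_natCast (v ^ (-(n : ℤ) - 2)), ← zpow_mul, ← zpow_mul,
    show (2 - -(n : ℤ)) * n = 2 * T + n by linear_combination hT,
    show (-(n : ℤ) - 2) * n = -(2 * T) - n by linear_combination -hT]
  have hkt_coeff : qfact v n * (v - v⁻¹) ^ n * (v - v⁻¹)⁻¹ * (1 * v ^ (-T - n) * v ^ (2 * T + n))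
      = (-1) ^ n * ((v - v⁻¹)⁻¹ * qpoch (v ^ (2 : ℤ)) (v ^ (2 : ℤ)) n) := by
    rw [qfact_mul_pow_eq_neg_one_pow_mul_qpoch hv hw, ← hTdef, one_mul, ← zpow_add₀ hv,
      show -T - n + (2 * T + n) = T by ring, zpow_neg]
    field_simp
  have hki_coeff : qfact v n * (v - v⁻¹) ^ n * (v - v⁻¹)⁻¹
        * ((-1) ^ (-(n : ℤ)) * 1 * v ^ T * v ^ (-(2 * T) - n))
      = (-1) ^ n * ((v - v⁻¹)⁻¹ * (v ^ (-(n : ℤ)) * qpoch (v ^ (-2 : ℤ)) (v ^ (-2 : ℤ)) n)) := by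
    rw [qfact_mul_pow_eq_zpow_mul_qpoch hv hw, ← hTdef, mul_one, mul_assoc _ (v ^ T),
      ← zpow_add₀ hv, show T + (-(2 * T) - n) = -T - n by ring,
      neg_one_zpow_eq_of_even_sub (b := n) ⟨-n, by ring⟩, zpow_natCast, zpow_sub₀ hv]
    simp only [zpow_neg, zpow_natCast]
    field_simp
  simp only [smul_sub, smul_smul]
  rw [hkt_coeff, hki_coeff, neg_mul, neg_mul, neg_smul, neg_smul]
  abel

lemma ytil'_base (hq : ∀ n : ℤ, n ≠ 0 → qint v n ≠ 0) (Bi Bt ki kt : A) (n : ℕ)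
    (hki : ki * Bi = v ^ (-n - 2 : ℤ) • (Bi * ki)) (hkt : kt * Bi = v ^ (2 - -n : ℤ) • (Bi * kt))
    (hbkl : BKL v Bi Bt ki kt (-n)) (e : ℤ) :
    ytil' v Bi Bt ki kt (-n) (n + 1) e = 0 := by
  rw [BKL, show (1 - -(n : ℤ)).toNat = n + 1 by omega, neg_neg, Int.toNat_natCast] at hbkl
  rw [ytil'_eq_sub, ytilRevSum_base, hbkl, ytilRevCorrection_base hq Bi ki kt n hki hkt, sub_self]

end SerreLusztig

theorem stmt5_general {K : Type*} [Field K]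
    {A : Type*} [Ring A] [Algebra (RatFunc K) A]
    (ε : ℕ) (hε : 0 < ε) (v : RatFunc K) (hv : v = RatFunc.X ^ ε)
    (Bi Bt ki kt : A) (c : ℤ) (hc : c ≤ 0)
    (hki : ki * Bi = v ^ (c - 2) • (Bi * ki))
    (hkt : kt * Bi = v ^ (2 - c) • (Bi * kt))
    (hbkl : BKL v Bi Bt ki kt c) :
    ∀ (m : ℕ), 1 - c ≤ (m : ℤ) → ∀ e : ℤ, e = 1 ∨ e = -1 →
      ytil' v Bi Bt ki kt c m e = 0 := by
  have hq : ∀ n : ℤ, n ≠ 0 → qint v n ≠ 0 := fun n hn => hv ▸ qint_X_pow_ne_zero hε hn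
  obtain ⟨n, rfl⟩ := Int.exists_eq_neg_ofNat hc
  intro m hm e he
  induction m, (by omega : n + 1 ≤ m) using Nat.le_induction with
  | base => exact ytil'_base hq Bi Bt ki kt n hki hkt hbkl e
  | succ m hnm ih =>
    have hrec := qComm_ytil' hq he Bi Bt ki kt (-n) hki hkt m (by omega) (by omega)
    rw [ih (by omega), map_zero, eq_comm, smul_eq_zero] at hrec
    exact hrec.resolve_left (hq _ (by omega))

/-- (Theorem 3.2, order-reversed Serre–Lusztig relations for i ≠ τi.) Assuming the
BKL relation, ỹ'_{m,e} = 0 for every integer m ≥ 1−c and every e ∈ {1, −1}. -/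
theorem stmt5 {K : Type*} [Field K] [CharZero K]
    {A : Type*} [Ring A] [Algebra (RatFunc K) A]
    (ε : ℕ) (hε : 0 < ε) (v : RatFunc K) (hv : v = RatFunc.X ^ ε)
    (Bi Bt ki kt : A) (c : ℤ) (hc : c ≤ 0)
    (hki : ki * Bi = v ^ (c - 2) • (Bi * ki))
    (hkt : kt * Bi = v ^ (2 - c) • (Bi * kt))
    (hbkl : BKL v Bi Bt ki kt c) :
    ∀ (m : ℕ), 1 - c ≤ (m : ℤ) → ∀ e : ℤ, e = 1 ∨ e = -1 →
      ytil' v Bi Bt ki kt c m e = 0 :=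
  stmt5_general ε hε v hv Bi Bt ki kt c hc hki hkt hbkl
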